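/- arXiv:0908.2616 — 2 statements merged into one kernel-verified Lean document; each statement's English description precedes it below -/
import Mathlib

section
/- (Theorem 1(ii), lower boundary case.) Consider the interval design with target p ∈ (0,1) and margins Δp₁, Δp₂ > 0. If F(1) ≥ p+Δp₂ (so that the MTD is u* = 1), then almost surely there exists N such that X_n = 1 for all n ≥ N. -/
/-!
For a dose `u`, the normalized sum `M_n(u) = ∑_{i ≤ n, X_i = u} (Y_i - F u) / N_i(u)`, with
`N_i(u)` the number of visits to `u` up to time `i`, is a martingale for `σ(U_1, …, U_n)`: the
dose `X_{n+1}` is decided by the first `n` responses while `U_{n+1}` is fresh. Its increments are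
orthogonal, so `E M_n(u)² ≤ ∑ 1/k² ≤ 2` and `M_n(u)` converges almost surely. Read along the
successive visits to `u`, this is a series `∑ c_k / (k + 1)`, and Kronecker's lemma gives
`F̂_n(u) → F(u)` at every dose visited infinitely often.

Eventually only such doses are used. As `F u > F 1 ≥ p + Δ₂` for `u ≥ 2` and `F 1 > p - Δ₁`,
from some time on the design steps down at every dose above `1` and never escalates from `1`,
so it reaches `1` within `m` steps and stays there.
-/

open MeasureTheory ProbabilityTheory Filter

noncomputable section

/-- Toxicity response of subject `i`: `Y i = 1` iff `U i ≤ F (X i)`. -/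
def resp {Ω : Type*} (F : ℕ → ℝ) (U : ℕ → Ω → ℝ) (X : ℕ → Ω → ℕ) (i : ℕ) (ω : Ω) : ℝ :=
  if U i ω ≤ F (X i ω) then 1 else 0

/-- Number of subjects among the first `n` assigned to dose level `u`. -/
def visits {Ω : Type*} (X : ℕ → Ω → ℕ) (u n : ℕ) (ω : Ω) : ℕ :=
  ((Finset.Icc 1 n).filter fun i => X i ω = u).card

/-- The martingale `M_n = ∑_{i=1}^n 1{X_i = u} (Y_i − F(u))`. -/
def Mart {Ω : Type*} (F : ℕ → ℝ) (U : ℕ → Ω → ℝ) (X : ℕ → Ω → ℕ) (u n : ℕ) (ω : Ω) : ℝ :=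
  ∑ i ∈ Finset.Icc 1 n, (if X i ω = u then (1:ℝ) else 0) * (resp F U X i ω - F u)

/-- Empirical toxicity frequency at dose `u` after `n` subjects. -/
def Fhat {Ω : Type*} (F : ℕ → ℝ) (U : ℕ → Ω → ℝ) (X : ℕ → Ω → ℕ) (u n : ℕ) (ω : Ω) : ℝ :=
  (∑ i ∈ Finset.Icc 1 n, if X i ω = u then resp F U X i ω else 0) / (visits X u n ω : ℝ)

/-- The filtration `ℱ_n = σ(U_1, …, U_n)`. -/
def natFilt {Ω : Type*} [mΩ : MeasurableSpace Ω] (U : ℕ → Ω → ℝ)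
    (hU : ∀ i, Measurable (U i)) : Filtration ℕ mΩ where
  seq n := ⨆ i ∈ Finset.Icc 1 n, MeasurableSpace.comap (U i) inferInstance
  mono' := fun a b hab => by
    refine iSup₂_le fun i hi => ?_
    refine le_iSup₂_of_le i ?_ le_rfl
    rw [Finset.mem_Icc] at hi ⊢
    exact ⟨hi.1, hi.2.trans hab⟩
  le' := fun n => iSup₂_le fun i _ => (hU i).comap_le

/-- The interval design transition rule with target `p` and margins `Δ₁, Δ₂`:
repeat the current dose if the empirical rate at it lies in `(p−Δ₁, p+Δ₂)`, escalate one
level (boundary permitting) if it is `≤ p−Δ₁`, and de-escalate one level (boundary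
permitting) if it is `≥ p+Δ₂`. -/
def intervalRule {Ω : Type*} (m : ℕ) (p Δ₁ Δ₂ : ℝ) (F : ℕ → ℝ) (U : ℕ → Ω → ℝ)
    (X : ℕ → Ω → ℕ) : Prop :=
  ∀ n, 1 ≤ n → ∀ ω : Ω,
    (p - Δ₁ < Fhat F U X (X n ω) n ω → Fhat F U X (X n ω) n ω < p + Δ₂ →
      X (n + 1) ω = X n ω) ∧
    (Fhat F U X (X n ω) n ω ≤ p - Δ₁ → X (n + 1) ω = min (X n ω + 1) m) ∧
    (p + Δ₂ ≤ Fhat F U X (X n ω) n ω → X (n + 1) ω = max (X n ω - 1) 1)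

open Finset Topology

theorem tendsto_sum_range_div_of_tendsto_sum_div_succ {c : ℕ → ℝ} {L : ℝ}
    (h : Tendsto (fun K => ∑ k ∈ range K, c k / (k + 1)) atTop (𝓝 L)) :
    Tendsto (fun K => (∑ k ∈ range K, c k) / K) atTop (𝓝 0) := by
  set T : ℕ → ℝ := fun K => ∑ k ∈ range K, c k / (k + 1)
  -- Abel summation: `∑_{k<K} c k = K T_K - ∑_{k<K} T_k`.
  have abel : ∀ K, ∑ k ∈ range K, c k = K * T K - ∑ k ∈ range K, T k := by
    intro K
    induction K with
    | zero => simp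
    | succ K ih =>
      simp only [T, sum_range_succ] at ih ⊢
      rw [ih]
      push_cast
      field_simp
      ring
  have hlim := h.sub h.cesaro
  rw [sub_self] at hlim
  refine hlim.congr' ?_
  filter_upwards [eventually_ne_atTop 0] with K hK
  rw [abel]
  field_simp

theorem Filter.Tendsto.of_comp_of_succ_le {α : Type*} {f : ℕ → α} {l : Filter α} {v : ℕ → ℕ}
    (hstep : ∀ n, v (n + 1) ≤ v n + 1) (hv : Tendsto v atTop atTop)
    (h : Tendsto (f ∘ v) atTop l) : Tendsto f atTop l := by
  have hattain : ∀ K ≥ v 0, ∃ n, v n = K := by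
    intro K hK
    have hex : ∃ n, K ≤ v n := (hv.eventually_ge_atTop K).exists
    rcases hn : Nat.find hex with _ | n
    · exact ⟨0, by have := hn ▸ Nat.find_spec hex; omega⟩
    · have hlt : ¬K ≤ v n := Nat.find_min hex (by omega)
      exact ⟨n + 1, by have := hn ▸ Nat.find_spec hex; have := hstep n; omega⟩
  have hgrowth : ∀ n, v n ≤ v 0 + n := fun n => by
    induction n with
    | zero => simp
    | succ n ih => have := hstep n; omega
  intro s hs
  obtain ⟨N, hN⟩ := eventually_atTop.mp (h hs)
  refine eventually_atTop.mpr ⟨v 0 + N, fun K hK => ?_⟩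
  obtain ⟨n, rfl⟩ := hattain K (by omega)
  exact hN n (by have := hgrowth n; omega)

lemma abs_ite_one_zero_sub_le {c : ℝ} (hc : c ∈ Set.Icc (0 : ℝ) 1) (q : Prop) [Decidable q] :
    |(if q then 1 else 0) - c| ≤ 1 := by
  split_ifs <;> rw [abs_le] <;> constructor <;> linarith [hc.1, hc.2]

theorem Nat.tendsto_count_atTop {p : ℕ → Prop} [DecidablePred p] (hp : (Set.ofPred p).Infinite) :
    Tendsto (Nat.count p) atTop atTop :=
  tendsto_atTop_atTop_of_monotone (Nat.count_monotone p) fun k =>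
    ⟨Nat.nth p k + 1, (Nat.count_nth_succ_of_infinite hp k).ge.trans' (Nat.le_succ k)⟩

theorem Filter.eventually_frequently_eq_of_finite {α ι : Type*} {l : Filter ι} {x : ι → α}
    {s : Set α} (hs : s.Finite) (hx : ∀ᶠ n in l, x n ∈ s) :
    ∀ᶠ n in l, ∃ᶠ k in l, x k = x n := by
  have hvisited : ∀ᶠ n in l, ∀ a ∈ s, (∃ᶠ k in l, x k = a) ∨ x n ≠ a := by
    refine (eventually_all_finite hs).mpr fun a _ => ?_
    by_cases ha : ∃ᶠ k in l, x k = a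
    · exact Eventually.of_forall fun _ => Or.inl ha
    · exact (not_frequently.mp ha).mono fun _ hn => Or.inr hn
  filter_upwards [hx, hvisited] with n hn hvis
  exact (hvis (x n) hn).resolve_right (not_not.mpr rfl)

theorem Nat.eventually_eq_zero_of_eventually_le_sub_one {y : ℕ → ℕ}
    (h : ∀ᶠ n in atTop, y (n + 1) ≤ y n - 1) : ∀ᶠ n in atTop, y n = 0 := by
  obtain ⟨N, hN⟩ := eventually_atTop.mp h
  have hdecr : ∀ j, y (N + j) ≤ y N - j := fun j => by
    induction j with
    | zero => simp
    | succ j ih => have := hN (N + j) (by omega); rw [← add_assoc]; omega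
  filter_upwards [eventually_ge_atTop (N + y N)] with n hn
  have := hdecr (n - N)
  rw [Nat.add_sub_cancel' (by omega)] at this
  omega

theorem measurable_eval_index {Ω β : Type*} {mΩ : MeasurableSpace Ω} [MeasurableSpace β]
    {f : ℕ → Ω → β} (hf : ∀ k, Measurable (f k)) {g : Ω → ℕ} (hg : Measurable g) :
    Measurable fun ω => f (g ω) ω :=
  (measurable_from_prod_countable_left (f := fun q : Ω × ℕ => f q.2 q.1) hf).comp
    (measurable_id.prodMk hg)

namespace MeasureTheory

variable {Ω : Type*} {m0 : MeasurableSpace Ω} {μ : Measure Ω} [IsFiniteMeasure μ]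
  {ℱ : Filtration ℕ m0} {f : ℕ → Ω → ℝ}

lemma integrable_of_abs_le {g : Ω → ℝ} (hg : Measurable g) {C : ℝ} (hC : ∀ ω, |g ω| ≤ C) :
    Integrable g μ :=
  .of_bound hg.aestronglyMeasurable C (.of_forall hC)

namespace Martingale

lemma integrable_mul (hf : Martingale f ℱ μ) (hbdd : ∀ n, ∃ C, ∀ ω, |f n ω| ≤ C)
    (i j : ℕ) : Integrable (f i * f j) μ := by
  obtain ⟨C, hC⟩ := hbdd i
  obtain ⟨D, hD⟩ := hbdd j
  have hmeas (k : ℕ) : Measurable (f k) := ((hf.stronglyMeasurable k).mono (ℱ.le k)).measurable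
  exact integrable_of_abs_le ((hmeas i).mul (hmeas j)) fun ω => by
    rw [Pi.mul_apply, abs_mul]
    exact mul_le_mul (hC ω) (hD ω) (abs_nonneg _) ((abs_nonneg _).trans (hC ω))

lemma integrable_sq (hf : Martingale f ℱ μ) (hbdd : ∀ n, ∃ C, ∀ ω, |f n ω| ≤ C)
    (n : ℕ) : Integrable (fun ω => f n ω ^ 2) μ := by
  have h : Integrable (fun ω => f n ω * f n ω) μ := hf.integrable_mul hbdd n n
  simpa only [sq] using h

lemma integral_mul_succ (hf : Martingale f ℱ μ) (hbdd : ∀ n, ∃ C, ∀ ω, |f n ω| ≤ C)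
    (n : ℕ) : ∫ ω, f n ω * f (n + 1) ω ∂μ = ∫ ω, f n ω ^ 2 ∂μ := by
  calc ∫ ω, f n ω * f (n + 1) ω ∂μ = ∫ ω, μ[f n * f (n + 1) | ℱ n] ω ∂μ :=
        (integral_condExp (ℱ.le n)).symm
    _ = ∫ ω, f n ω * μ[f (n + 1) | ℱ n] ω ∂μ :=
        integral_congr_ae (condExp_mul_of_stronglyMeasurable_left (hf.stronglyMeasurable n)
          (hf.integrable_mul hbdd n (n + 1)) (hf.integrable (n + 1)))
    _ = ∫ ω, f n ω ^ 2 ∂μ := integral_congr_ae <| by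
        filter_upwards [hf.condExp_ae_eq n.le_succ] with ω hω
        rw [hω, sq]

lemma integral_sq_succ (hf : Martingale f ℱ μ) (hbdd : ∀ n, ∃ C, ∀ ω, |f n ω| ≤ C)
    (n : ℕ) :
    ∫ ω, f (n + 1) ω ^ 2 ∂μ = ∫ ω, f n ω ^ 2 ∂μ + ∫ ω, (f (n + 1) ω - f n ω) ^ 2 ∂μ := by
  have hsq (k : ℕ) : Integrable (fun ω => f k ω ^ 2) μ := hf.integrable_sq hbdd k
  have hmul : Integrable (fun ω => 2 * (f n ω * f (n + 1) ω)) μ :=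
    (hf.integrable_mul hbdd n (n + 1)).const_mul 2
  have hsub : Integrable (fun ω => f (n + 1) ω ^ 2 - 2 * (f n ω * f (n + 1) ω)) μ :=
    (hsq _).sub hmul
  have hexpand : (fun ω => (f (n + 1) ω - f n ω) ^ 2)
      = fun ω => f (n + 1) ω ^ 2 - 2 * (f n ω * f (n + 1) ω) + f n ω ^ 2 := by
    ext ω; ring
  rw [hexpand, integral_add hsub (hsq n), integral_sub (hsq _) hmul, integral_const_mul,
    hf.integral_mul_succ hbdd]
  ring

lemma integral_sq_eq_add_sum (hf : Martingale f ℱ μ) (hbdd : ∀ n, ∃ C, ∀ ω, |f n ω| ≤ C)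
    (n : ℕ) : ∫ ω, f n ω ^ 2 ∂μ
    = ∫ ω, f 0 ω ^ 2 ∂μ + ∑ i ∈ range n, ∫ ω, (f (i + 1) ω - f i ω) ^ 2 ∂μ := by
  induction n with
  | zero => simp
  | succ n ih => rw [hf.integral_sq_succ hbdd, ih, sum_range_succ, add_assoc]

theorem exists_ae_tendsto_of_integral_sq_le (hf : Martingale f ℱ μ)
    (hbdd : ∀ n, ∃ C, ∀ ω, |f n ω| ≤ C) {C : ℝ} (hC : ∀ n, ∫ ω, f n ω ^ 2 ∂μ ≤ C) :
    ∀ᵐ ω ∂μ, ∃ c, Tendsto (fun n => f n ω) atTop (𝓝 c) := by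
  refine hf.submartingale.exists_ae_tendsto_of_bdd (R := ((μ.real Set.univ + C) / 2).toNNReal)
    fun n => ?_
  have hsq := hf.integrable_sq hbdd n
  -- `|x| ≤ (1 + x ^ 2) / 2` turns the `L²` bound into an `L¹` bound.
  have hL1 : ∫ ω, ‖f n ω‖ ∂μ ≤ (μ.real Set.univ + C) / 2 := calc
    ∫ ω, ‖f n ω‖ ∂μ ≤ ∫ ω, (1 + f n ω ^ 2) / 2 ∂μ :=
      integral_mono (hf.integrable n).norm (((integrable_const 1).add hsq).div_const 2)
        fun ω => by nlinarith [sq_nonneg (|f n ω| - 1), sq_abs (f n ω), Real.norm_eq_abs (f n ω)]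
    _ = (μ.real Set.univ + ∫ ω, f n ω ^ 2 ∂μ) / 2 := by
      rw [integral_div, integral_add (integrable_const 1) hsq, integral_const, smul_eq_mul, mul_one]
    _ ≤ (μ.real Set.univ + C) / 2 := by linarith [hC n]
  rw [eLpNorm_one_eq_lintegral_enorm, ← ofReal_integral_norm_eq_lintegral_enorm (hf.integrable n)]
  exact ENNReal.ofReal_le_ofReal hL1

end Martingale

end MeasureTheory

namespace IntervalDesign

variable {Ω : Type*} {F : ℕ → ℝ} {U : ℕ → Ω → ℝ} {X : ℕ → Ω → ℕ} {u : ℕ} {ω : Ω}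

/-- The time of the `(k+1)`-st visit to dose `u`. -/
def visitTime (X : ℕ → Ω → ℕ) (u : ℕ) (ω : Ω) (k : ℕ) : ℕ :=
  Nat.nth (fun i => 1 ≤ i ∧ X i ω = u) k

lemma visits_eq_count (n : ℕ) :
    visits X u n ω = Nat.count (fun i => 1 ≤ i ∧ X i ω = u) (n + 1) := by
  rw [Nat.count_eq_card_filter_range, visits]
  congr 1
  ext i
  simp only [mem_filter, mem_Icc, mem_range]
  omega

lemma visits_zero : visits X u 0 ω = 0 := by
  simp [visits]

lemma visits_succ (n : ℕ) :
    visits X u (n + 1) ω = visits X u n ω + if X (n + 1) ω = u then 1 else 0 := by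
  rw [visits_eq_count, visits_eq_count, Nat.count_succ]
  simp

lemma visitTime_visits {n : ℕ} (hn : X (n + 1) ω = u) :
    visitTime X u ω (visits X u n ω) = n + 1 := by
  rw [visitTime, visits_eq_count]
  exact Nat.nth_count ⟨n.succ_pos, hn⟩

lemma tendsto_visits_atTop (h : ∃ᶠ n in atTop, X n ω = u) :
    Tendsto (fun n => visits X u n ω) atTop atTop := by
  classical
  have hinf : (Set.ofPred fun i => 1 ≤ i ∧ X i ω = u).Infinite :=
    Nat.frequently_atTop_iff_infinite.mp ((eventually_ge_atTop 1).and_frequently h)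
  simpa only [visits_eq_count, Function.comp_def] using
    (Nat.tendsto_count_atTop hinf).comp (tendsto_add_atTop_nat 1)

lemma sum_Icc_ite_eq_sum_range_visits (g : ℕ → ℕ → ℝ) (n : ℕ) :
    ∑ i ∈ Icc 1 n, (if X i ω = u then g (visits X u i ω) i else 0)
      = ∑ k ∈ range (visits X u n ω), g (k + 1) (visitTime X u ω k) := by
  induction n with
  | zero => simp [visits_zero]
  | succ n ih =>
    rw [sum_Icc_succ_top (by omega), ih, visits_succ]
    split_ifs with hn
    · rw [sum_range_succ, visitTime_visits hn]
    · simp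

lemma abs_resp_sub_le (i : ℕ) (hu : F u ∈ Set.Icc (0 : ℝ) 1) : |resp F U X i ω - F u| ≤ 1 :=
  abs_ite_one_zero_sub_le hu _

def normalizedIncrement (F : ℕ → ℝ) (U : ℕ → Ω → ℝ) (X : ℕ → Ω → ℕ) (u i : ℕ) (ω : Ω) : ℝ :=
  if X i ω = u then (resp F U X i ω - F u) / visits X u i ω else 0

def normalizedMart (F : ℕ → ℝ) (U : ℕ → Ω → ℝ) (X : ℕ → Ω → ℕ) (u n : ℕ) (ω : Ω) : ℝ :=
  ∑ i ∈ Icc 1 n, normalizedIncrement F U X u i ω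

lemma normalizedMart_eq_sum_range (n : ℕ) :
    normalizedMart F U X u n ω = ∑ k ∈ range (visits X u n ω),
      (resp F U X (visitTime X u ω k) ω - F u) / (k + 1) := by
  simpa [normalizedMart, normalizedIncrement] using
    sum_Icc_ite_eq_sum_range_visits (fun v i => (resp F U X i ω - F u) / v) n

lemma Fhat_sub_eq {n : ℕ} (hn : visits X u n ω ≠ 0) :
    Fhat F U X u n ω - F u = (∑ k ∈ range (visits X u n ω),
      (resp F U X (visitTime X u ω k) ω - F u)) / visits X u n ω := by
  have hsum := sum_Icc_ite_eq_sum_range_visits (X := X) (ω := ω) (u := u)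
    (fun _ i => resp F U X i ω) n
  rw [Fhat, hsum, sum_sub_distrib, sum_const, card_range, nsmul_eq_mul]
  field_simp

lemma sum_sq_normalizedIncrement_le (hu : F u ∈ Set.Icc (0 : ℝ) 1) (n : ℕ) :
    ∑ i ∈ Icc 1 n, normalizedIncrement F U X u i ω ^ 2 ≤ 2 := by
  have hsum := sum_Icc_ite_eq_sum_range_visits (X := X) (ω := ω) (u := u)
    (fun v i => ((resp F U X i ω - F u) / v) ^ 2) n
  simp only [normalizedIncrement, ite_pow, zero_pow two_ne_zero]
  rw [hsum]
  calc ∑ k ∈ range (visits X u n ω), ((resp F U X (visitTime X u ω k) ω - F u) / (k + 1 : ℕ)) ^ 2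
      ≤ ∑ k ∈ range (visits X u n ω), (((k + 1 : ℕ) : ℝ) ^ 2)⁻¹ := by
        refine sum_le_sum fun k _ => ?_
        rw [div_pow, div_eq_mul_inv]
        refine mul_le_of_le_one_left (by positivity) ?_
        rw [← sq_abs]
        exact pow_le_one₀ (abs_nonneg _) (abs_resp_sub_le _ hu)
    _ = ∑ i ∈ Ioo 0 (visits X u n ω + 1), ((i : ℝ) ^ 2)⁻¹ := by
        rw [← Ico_add_one_left_eq_Ioo, sum_Ico_eq_sum_range]
        simp [add_comm]
    _ ≤ 2 := (sum_Ioo_inv_sq_le 0 _).trans_eq (by norm_num)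

theorem tendsto_Fhat_of_tendsto_normalizedMart {L : ℝ} (hvis : ∃ᶠ n in atTop, X n ω = u)
    (hM : Tendsto (fun n => normalizedMart F U X u n ω) atTop (𝓝 L)) :
    Tendsto (fun n => Fhat F U X u n ω) atTop (𝓝 (F u)) := by
  set c : ℕ → ℝ := fun k => resp F U X (visitTime X u ω k) ω - F u
  have hv := tendsto_visits_atTop hvis
  have hpartial : Tendsto (fun K => ∑ k ∈ range K, c k / (k + 1)) atTop (𝓝 L) := by
    refine Tendsto.of_comp_of_succ_le (v := fun n => visits X u n ω)
      (fun n => by rw [visits_succ]; split <;> omega) hv ?_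
    simpa only [Function.comp_def, normalizedMart_eq_sum_range] using hM
  have hmean := (tendsto_sum_range_div_of_tendsto_sum_div_succ hpartial).comp hv
  rw [← tendsto_sub_nhds_zero_iff]
  refine hmean.congr' ?_
  filter_upwards [hv.eventually_ne_atTop 0] with n hn
  exact (Fhat_sub_eq hn).symm

lemma one_le_visits {i : ℕ} (hi : 1 ≤ i) (hXi : X i ω = u) : 1 ≤ visits X u i ω := by
  obtain ⟨k, rfl⟩ := Nat.exists_eq_add_of_le' hi
  rw [visits_succ, if_pos hXi]
  omega

lemma abs_normalizedIncrement_le (hu : F u ∈ Set.Icc (0 : ℝ) 1) {i : ℕ} (hi : 1 ≤ i) (ω : Ω) :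
    |normalizedIncrement F U X u i ω| ≤ 1 := by
  unfold normalizedIncrement
  split_ifs with hXi
  · have hv : (1 : ℝ) ≤ visits X u i ω := by exact_mod_cast one_le_visits hi hXi
    rw [abs_div, Nat.abs_cast, div_le_one (by linarith)]
    exact (abs_resp_sub_le i hu).trans hv
  · simp

lemma abs_normalizedMart_le (hu : F u ∈ Set.Icc (0 : ℝ) 1) (n : ℕ) (ω : Ω) :
    |normalizedMart F U X u n ω| ≤ n :=
  (abs_sum_le_sum_abs _ _).trans <| by
    simpa using sum_le_sum fun i hi => abs_normalizedIncrement_le (X := X) (U := U) hu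
      (mem_Icc.mp hi).1 ω

lemma normalizedMart_succ (n : ℕ) : normalizedMart F U X u (n + 1)
    = normalizedMart F U X u n + normalizedIncrement F U X u (n + 1) := by
  ext ω
  exact sum_Icc_succ_top (by omega) _

/-- Splits the increment into an `ℱ n`-measurable weight and a centred function of the fresh
variable `U (n + 1)`. -/
lemma normalizedIncrement_succ (n : ℕ) : normalizedIncrement F U X u (n + 1)
    = fun ω => (if X (n + 1) ω = u then ((visits X u n ω : ℝ) + 1)⁻¹ else 0)
      * ((if U (n + 1) ω ≤ F u then 1 else 0) - F u) := by
  ext ω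
  by_cases hX : X (n + 1) ω = u
  · rw [normalizedIncrement, if_pos hX, if_pos hX, resp, hX, visits_succ, if_pos hX]
    push_cast
    rw [div_eq_inv_mul]
  · rw [normalizedIncrement, if_neg hX, if_neg hX, zero_mul]

variable {m : ℕ} {p Δ₁ Δ₂ : ℝ}

lemma succ_eq_ite_of_intervalRule (hrule : intervalRule m p Δ₁ Δ₂ F U X) {n : ℕ} (hn : 1 ≤ n) :
    X (n + 1) = fun ω =>
      if p + Δ₂ ≤ Fhat F U X (X n ω) n ω then max (X n ω - 1) 1
      else if Fhat F U X (X n ω) n ω ≤ p - Δ₁ then min (X n ω + 1) m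
      else X n ω := by
  ext ω
  obtain ⟨hstay, hup, hdown⟩ := hrule n hn ω
  split_ifs with hd hu
  · exact hdown hd
  · exact hup hu
  · exact hstay (not_le.mp hu) (not_le.mp hd)

lemma succ_eq_max_of_intervalRule (hrule : intervalRule m p Δ₁ Δ₂ F U X) {n : ℕ} (hn : 1 ≤ n)
    (h : p + Δ₂ ≤ Fhat F U X (X n ω) n ω ∨ (X n ω = 1 ∧ p - Δ₁ < Fhat F U X (X n ω) n ω)) :
    X (n + 1) ω = max (X n ω - 1) 1 := by
  obtain ⟨hstay, -, hdown⟩ := hrule n hn ω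
  rcases h with hge | ⟨h1, hgt⟩
  · exact hdown hge
  · by_cases hlt : Fhat F U X (X n ω) n ω < p + Δ₂
    · rw [hstay hgt hlt, h1]; rfl
    · exact hdown (not_lt.mp hlt)

theorem eventually_eq_one_of_tendsto_Fhat (hm : 1 ≤ m) (hFmono : StrictMonoOn F (Set.Icc 1 m))
    (hXrange : ∀ i, 1 ≤ i → X i ω ∈ Set.Icc 1 m) (hrule : intervalRule m p Δ₁ Δ₂ F U X)
    (hΔ₁ : 0 < Δ₁) (hΔ₂ : 0 < Δ₂) (hbound : p + Δ₂ ≤ F 1)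
    (hFhat : ∀ u ∈ Set.Icc 1 m, (∃ᶠ n in atTop, X n ω = u) →
      Tendsto (fun n => Fhat F U X u n ω) atTop (𝓝 (F u))) :
    ∀ᶠ n in atTop, X n ω = 1 := by
  have hrange : ∀ᶠ n in atTop, X n ω ∈ Set.Icc 1 m :=
    eventually_atTop.mpr ⟨1, hXrange⟩
  have hrecurrent := eventually_frequently_eq_of_finite (Set.finite_Icc 1 m) hrange
  have hdecides : ∀ u ∈ Set.Icc 1 m, ∀ᶠ n in atTop, (∃ᶠ k in atTop, X k ω = u) →
      p + Δ₂ ≤ Fhat F U X u n ω ∨ (u = 1 ∧ p - Δ₁ < Fhat F U X u n ω) := by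
    intro u hu
    by_cases hvis : ∃ᶠ k in atTop, X k ω = u
    · have hlim := hFhat u hu hvis
      obtain rfl | h1u := eq_or_ne u 1
      · filter_upwards [hlim.eventually (eventually_gt_nhds (by linarith : p - Δ₁ < F 1))]
          with n hn _ using Or.inr ⟨rfl, hn⟩
      · have hlt : p + Δ₂ < F u :=
          hbound.trans_lt (hFmono ⟨le_rfl, hm⟩ hu (lt_of_le_of_ne hu.1 h1u.symm))
        filter_upwards [hlim.eventually (eventually_gt_nhds hlt)] with n hn _ using Or.inl hn.le
    · exact Eventually.of_forall fun _ h => absurd h hvis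
  have hstep : ∀ᶠ n in atTop, X (n + 1) ω = max (X n ω - 1) 1 := by
    filter_upwards [eventually_ge_atTop 1, hrange, hrecurrent,
      (eventually_all_finite (Set.finite_Icc 1 m)).mpr hdecides] with n hn hXn hrec hdec
    exact succ_eq_max_of_intervalRule hrule hn (hdec _ hXn hrec)
  have hbottom := Nat.eventually_eq_zero_of_eventually_le_sub_one (y := fun n => X n ω - 1)
    (hstep.mono fun n hn => by simp only [hn]; omega)
  filter_upwards [hbottom, hrange] with n hn hXn
  exact le_antisymm (by omega) hXn.1

section Measurability

variable {m' : MeasurableSpace Ω} {n : ℕ}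

lemma measurable_resp {i : ℕ} (hU : Measurable[m'] (U i)) (hX : Measurable[m'] (X i)) :
    Measurable[m'] (resp F U X i) :=
  .ite (measurableSet_le hU (measurable_from_top.comp hX)) measurable_const measurable_const

lemma measurable_visits (hX : ∀ i ∈ Icc 1 n, Measurable[m'] (X i)) :
    Measurable[m'] (visits X u n) := by
  have hsum : visits X u n = fun ω => ∑ i ∈ Icc 1 n, if X i ω = u then 1 else 0 := by
    ext ω
    rw [visits, card_filter]
  rw [hsum]
  exact Finset.measurable_sum _ fun i hi =>
    .ite (hX i hi (measurableSet_singleton u)) measurable_const measurable_const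

lemma measurable_Fhat (hU : ∀ i ∈ Icc 1 n, Measurable[m'] (U i))
    (hX : ∀ i ∈ Icc 1 n, Measurable[m'] (X i)) : Measurable[m'] (Fhat F U X u n) := by
  refine .div (Finset.measurable_sum _ fun i hi => ?_)
    (measurable_from_top.comp (measurable_visits hX))
  exact .ite (hX i hi (measurableSet_singleton u)) (measurable_resp (hU i hi) (hX i hi))
    measurable_const

lemma measurable_normalizedIncrement {i : ℕ} (hi : 1 ≤ i) (hU : Measurable[m'] (U i))
    (hX : ∀ j ∈ Icc 1 i, Measurable[m'] (X j)) :
    Measurable[m'] (normalizedIncrement F U X u i) := by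
  have hXi := hX i (mem_Icc.mpr ⟨hi, le_rfl⟩)
  exact .ite (hXi (measurableSet_singleton u))
    (((measurable_resp hU hXi).sub measurable_const).div
      (measurable_from_top.comp (measurable_visits hX)))
    measurable_const

lemma measurable_normalizedMart (hU : ∀ i ∈ Icc 1 n, Measurable[m'] (U i))
    (hX : ∀ i ∈ Icc 1 n, Measurable[m'] (X i)) :
    Measurable[m'] (normalizedMart F U X u n) :=
  Finset.measurable_sum _ fun i hi => measurable_normalizedIncrement (mem_Icc.mp hi).1 (hU i hi)
    fun j hj => hX j (Icc_subset_Icc_right (mem_Icc.mp hi).2 hj)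

end Measurability

section Probability

variable [MeasurableSpace Ω] {P : Measure Ω} {n : ℕ}

lemma measurable_U_natFilt (hU : ∀ i, Measurable (U i)) {i : ℕ} (hi : i ∈ Icc 1 n) :
    Measurable[natFilt U hU n] (U i) :=
  measurable_iff_comap_le.mpr
    (le_iSup₂ (f := fun i (_ : i ∈ Icc 1 n) => MeasurableSpace.comap (U i) inferInstance) i hi)

lemma measurable_X_natFilt (hU : ∀ i, Measurable (U i)) {x₀ : ℕ}
    (hX1 : ∀ ω, X 1 ω = x₀) (hrule : intervalRule m p Δ₁ Δ₂ F U X) :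
    ∀ n, ∀ j ∈ Icc 1 (n + 1), Measurable[natFilt U hU n] (X j) := by
  intro n
  induction n with
  | zero =>
    intro j hj
    obtain rfl : j = 1 := by simp only [mem_Icc] at hj; omega
    rw [show X 1 = fun _ => x₀ from funext hX1]
    exact measurable_const
  | succ n ih =>
    have hprev : ∀ j ∈ Icc 1 (n + 1), Measurable[natFilt U hU (n + 1)] (X j) :=
      fun j hj => (ih j hj).mono ((natFilt U hU).mono n.le_succ) le_rfl
    intro j hj
    obtain hj' | rfl : j ∈ Icc 1 (n + 1) ∨ j = n + 1 + 1 := by simp only [mem_Icc] at hj ⊢; omega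
    · exact hprev j hj'
    have hXn := hprev (n + 1) (by simp)
    have hFhat : Measurable[natFilt U hU (n + 1)] fun ω => Fhat F U X (X (n + 1) ω) (n + 1) ω :=
      measurable_eval_index (f := fun u => Fhat F U X u (n + 1))
        (fun _ => measurable_Fhat (fun _ hi => measurable_U_natFilt hU hi) hprev) hXn
    rw [succ_eq_ite_of_intervalRule hrule n.succ_pos]
    exact .ite (measurableSet_le measurable_const hFhat)
      ((measurable_from_top (f := fun v : ℕ => max (v - 1) 1)).comp hXn)
      (.ite (measurableSet_le hFhat measurable_const)
        ((measurable_from_top (f := fun v : ℕ => min (v + 1) m)).comp hXn) hXn)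

lemma indep_comap_natFilt (hU : ∀ i, Measurable (U i)) (hUindep : iIndepFun U P) (n : ℕ) :
    Indep (MeasurableSpace.comap (U (n + 1)) inferInstance) (natFilt U hU n) P := by
  have hindep := indep_biSup_compl (fun i => (hU i).comap_le) hUindep.iIndep (Icc 1 n : Set ℕ)
  refine (indep_of_indep_of_le_left (indep_of_indep_of_le_right hindep ?_) ?_).symm
  · exact le_iSup₂ (f := fun i (_ : i ∈ (Icc 1 n : Set ℕ)ᶜ) =>
      MeasurableSpace.comap (U i) inferInstance) (n + 1) (by simp)
  · exact iSup₂_le fun i hi => le_iSup₂ (f := fun i (_ : i ∈ (Icc 1 n : Set ℕ)) =>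
      MeasurableSpace.comap (U i) inferInstance) i (mem_coe.mpr hi)

lemma measureReal_setOf_le (hU : ∀ i, Measurable (U i))
    (hUdist : ∀ i, Measure.map (U i) P = volume.restrict (Set.Icc (0 : ℝ) 1))
    {c : ℝ} (hc : c ∈ Set.Icc (0 : ℝ) 1) (i : ℕ) : P.real {ω | U i ω ≤ c} = c := by
  have hinter : Set.Iic c ∩ Set.Icc (0 : ℝ) 1 = Set.Icc 0 c := by
    ext t
    simp only [Set.mem_inter_iff, Set.mem_Iic, Set.mem_Icc]
    constructor
    · rintro ⟨htc, ht0, -⟩; exact ⟨ht0, htc⟩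
    · rintro ⟨ht0, htc⟩; exact ⟨htc, ht0, htc.trans hc.2⟩
  rw [measureReal_def, show {ω | U i ω ≤ c} = U i ⁻¹' Set.Iic c from rfl,
    ← Measure.map_apply (hU i) measurableSet_Iic, hUdist, Measure.restrict_apply measurableSet_Iic,
    hinter, Real.volume_Icc, sub_zero, ENNReal.toReal_ofReal hc.1]

variable [IsProbabilityMeasure P]

lemma integral_ite_le_sub_eq_zero (hU : ∀ i, Measurable (U i))
    (hUdist : ∀ i, Measure.map (U i) P = volume.restrict (Set.Icc (0 : ℝ) 1))
    {c : ℝ} (hc : c ∈ Set.Icc (0 : ℝ) 1) (i : ℕ) :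
    ∫ ω, ((if U i ω ≤ c then 1 else 0) - c) ∂P = 0 := by
  have hindicator : (fun ω => if U i ω ≤ c then (1 : ℝ) else 0)
      = Set.indicator {ω | U i ω ≤ c} 1 := by
    ext ω
    simp [Set.indicator_apply]
  have hmeas : MeasurableSet {ω | U i ω ≤ c} := measurableSet_le (hU i) measurable_const
  have hint : Integrable (fun ω => if U i ω ≤ c then (1 : ℝ) else 0) P := by
    rw [hindicator]
    exact (integrable_const 1).indicator hmeas
  rw [integral_sub hint (integrable_const c), hindicator, integral_indicator_one hmeas,
    measureReal_setOf_le hU hUdist hc, integral_const, probReal_univ, one_smul, sub_self]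

lemma integrable_normalizedIncrement (hU : ∀ i, Measurable (U i))
    (hX : ∀ n, ∀ j ∈ Icc 1 (n + 1), Measurable[natFilt U hU n] (X j))
    (hu : F u ∈ Set.Icc (0 : ℝ) 1) {i : ℕ} (hi : 1 ≤ i) :
    Integrable (normalizedIncrement F U X u i) P := by
  refine integrable_of_abs_le (measurable_normalizedIncrement hi (hU i) fun j hj => ?_)
    (abs_normalizedIncrement_le hu hi)
  exact (hX j j (by simp [(mem_Icc.mp hj).1])).mono ((natFilt U hU).le j) le_rfl

lemma condExp_normalizedIncrement_succ (hU : ∀ i, Measurable (U i)) (hUindep : iIndepFun U P)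
    (hUdist : ∀ i, Measure.map (U i) P = volume.restrict (Set.Icc (0 : ℝ) 1))
    (hX : ∀ n, ∀ j ∈ Icc 1 (n + 1), Measurable[natFilt U hU n] (X j))
    (hu : F u ∈ Set.Icc (0 : ℝ) 1) (n : ℕ) :
    P[normalizedIncrement F U X u (n + 1) | natFilt U hU n] =ᵐ[P] 0 := by
  set g : Ω → ℝ := fun ω => if X (n + 1) ω = u then ((visits X u n ω : ℝ) + 1)⁻¹ else 0
  set h : Ω → ℝ := fun ω => (if U (n + 1) ω ≤ F u then 1 else 0) - F u
  have hD : normalizedIncrement F U X u (n + 1) = g * h := normalizedIncrement_succ n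
  have hg : Measurable[natFilt U hU n] g :=
    .ite (hX n (n + 1) (by simp) (measurableSet_singleton u))
      ((measurable_from_top.comp (measurable_visits fun j hj =>
        hX n j (Icc_subset_Icc_right n.le_succ hj))).add_const 1).inv
      measurable_const
  have hφ : Measurable fun t : ℝ => (if t ≤ F u then (1 : ℝ) else 0) - F u :=
    (Measurable.ite measurableSet_Iic measurable_const measurable_const).sub_const _
  have hh : StronglyMeasurable[MeasurableSpace.comap (U (n + 1)) inferInstance] h :=
    (hφ.comp (comap_measurable (U (n + 1)))).stronglyMeasurable
  have hhint : Integrable h P :=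
    integrable_of_abs_le (hφ.comp (hU (n + 1))) fun ω => abs_ite_one_zero_sub_le hu _
  rw [hD]
  filter_upwards [condExp_mul_of_stronglyMeasurable_left hg.stronglyMeasurable
      (hD ▸ integrable_normalizedIncrement hU hX hu n.succ_pos) hhint,
    condExp_indep_eq (hU (n + 1)).comap_le ((natFilt U hU).le n) hh
      (indep_comap_natFilt hU hUindep n)] with ω hpull hindep
  rw [hpull, Pi.mul_apply, hindep, integral_ite_le_sub_eq_zero hU hUdist hu, mul_zero, Pi.zero_apply]

theorem martingale_normalizedMart (hU : ∀ i, Measurable (U i)) (hUindep : iIndepFun U P)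
    (hUdist : ∀ i, Measure.map (U i) P = volume.restrict (Set.Icc (0 : ℝ) 1))
    (hX : ∀ n, ∀ j ∈ Icc 1 (n + 1), Measurable[natFilt U hU n] (X j))
    (hu : F u ∈ Set.Icc (0 : ℝ) 1) :
    Martingale (normalizedMart F U X u) (natFilt U hU) P := by
  have hadapted (n : ℕ) : Measurable[natFilt U hU n] (normalizedMart F U X u n) :=
    measurable_normalizedMart (fun i hi => measurable_U_natFilt hU hi)
      fun j hj => hX n j (Icc_subset_Icc_right n.le_succ hj)
  have hint (n : ℕ) : Integrable (normalizedMart F U X u n) P :=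
    integrable_of_abs_le ((hadapted n).mono ((natFilt U hU).le n) le_rfl)
      (abs_normalizedMart_le hu n)
  refine martingale_nat (fun n => (hadapted n).stronglyMeasurable) hint fun n => ?_
  rw [normalizedMart_succ]
  filter_upwards [condExp_add (hint n) (integrable_normalizedIncrement hU hX hu n.succ_pos)
      (natFilt U hU n), condExp_normalizedIncrement_succ hU hUindep hUdist hX hu n] with ω hadd hD
  rw [hadd, Pi.add_apply, hD, condExp_of_stronglyMeasurable ((natFilt U hU).le n)
    (hadapted n).stronglyMeasurable (hint n), Pi.zero_apply, add_zero]

lemma integral_sq_normalizedMart_le (hU : ∀ i, Measurable (U i)) (hUindep : iIndepFun U P)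
    (hUdist : ∀ i, Measure.map (U i) P = volume.restrict (Set.Icc (0 : ℝ) 1))
    (hX : ∀ n, ∀ j ∈ Icc 1 (n + 1), Measurable[natFilt U hU n] (X j))
    (hu : F u ∈ Set.Icc (0 : ℝ) 1) (n : ℕ) :
    ∫ ω, normalizedMart F U X u n ω ^ 2 ∂P ≤ 2 := by
  have hsq (i : ℕ) (hi : 1 ≤ i) : Integrable (fun ω => normalizedIncrement F U X u i ω ^ 2) P := by
    refine .of_bound ((integrable_normalizedIncrement hU hX hu hi).aestronglyMeasurable.pow 2) 1
      (.of_forall fun ω => ?_)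
    rw [Real.norm_eq_abs, abs_pow]
    exact pow_le_one₀ (abs_nonneg _) (abs_normalizedIncrement_le hu hi ω)
  calc ∫ ω, normalizedMart F U X u n ω ^ 2 ∂P
      = ∫ ω, ∑ i ∈ Icc 1 n, normalizedIncrement F U X u i ω ^ 2 ∂P := by
        rw [(martingale_normalizedMart hU hUindep hUdist hX hu).integral_sq_eq_add_sum
            fun n => ⟨n, abs_normalizedMart_le hu n⟩,
          integral_finsetSum _ fun i hi => hsq i (mem_Icc.mp hi).1,
          ← Ico_add_one_right_eq_Icc, ← zero_add 1, ← sum_Ico_add', ← range_eq_Ico]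
        simp only [normalizedMart_succ, Pi.add_apply, add_sub_cancel_left]
        simp [normalizedMart]
    _ ≤ ∫ _, (2 : ℝ) ∂P :=
        integral_mono_of_nonneg (.of_forall fun _ => by positivity) (integrable_const 2)
          (.of_forall fun ω => sum_sq_normalizedIncrement_le hu n)
    _ = 2 := by simp

theorem ae_tendsto_normalizedMart (hU : ∀ i, Measurable (U i)) (hUindep : iIndepFun U P)
    (hUdist : ∀ i, Measure.map (U i) P = volume.restrict (Set.Icc (0 : ℝ) 1))
    (hX : ∀ n, ∀ j ∈ Icc 1 (n + 1), Measurable[natFilt U hU n] (X j))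
    (hu : F u ∈ Set.Icc (0 : ℝ) 1) :
    ∀ᵐ ω ∂P, ∃ L, Tendsto (fun n => normalizedMart F U X u n ω) atTop (𝓝 L) :=
  (martingale_normalizedMart hU hUindep hUdist hX hu).exists_ae_tendsto_of_integral_sq_le
    (fun n => ⟨n, abs_normalizedMart_le hu n⟩)
    (integral_sq_normalizedMart_le hU hUindep hUdist hX hu)

end Probability

end IntervalDesign

theorem interval_design_converges_lower_boundary_general
    {Ω : Type*} [MeasurableSpace Ω] (P : Measure Ω) [IsProbabilityMeasure P]
    (m : ℕ) (hm : 1 ≤ m)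
    (F : ℕ → ℝ) (hFmono : StrictMonoOn F (Set.Icc 1 m))
    (hF01 : ∀ v ∈ Set.Icc 1 m, F v ∈ Set.Icc (0:ℝ) 1)
    (U : ℕ → Ω → ℝ) (hUmeas : ∀ i, Measurable (U i))
    (hUindep : iIndepFun U P)
    (hUdist : ∀ i, Measure.map (U i) P = volume.restrict (Set.Icc (0:ℝ) 1))
    (X : ℕ → Ω → ℕ)
    (hXrange : ∀ i, 1 ≤ i → ∀ ω, X i ω ∈ Set.Icc 1 m)
    (x₀ : ℕ) (hX1 : ∀ ω, X 1 ω = x₀)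
    (p Δ₁ Δ₂ : ℝ) (hΔ₁ : 0 < Δ₁) (hΔ₂ : 0 < Δ₂)
    (hrule : intervalRule m p Δ₁ Δ₂ F U X)
    (hbound : p + Δ₂ ≤ F 1) :
    ∀ᵐ ω ∂P, ∃ N, ∀ n, N ≤ n → X n ω = 1 := by
  have hX := IntervalDesign.measurable_X_natFilt hUmeas hX1 hrule
  have hconv : ∀ᵐ ω ∂P, ∀ u ∈ Set.Icc 1 m,
      ∃ L, Tendsto (fun n => IntervalDesign.normalizedMart F U X u n ω) atTop (𝓝 L) :=
    (ae_ball_iff (Set.to_countable _)).mpr fun u hu =>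
      IntervalDesign.ae_tendsto_normalizedMart hUmeas hUindep hUdist hX (hF01 u hu)
  filter_upwards [hconv] with ω hω
  refine eventually_atTop.mp (IntervalDesign.eventually_eq_one_of_tendsto_Fhat hm hFmono
    (fun i hi => hXrange i hi ω) hrule hΔ₁ hΔ₂ hbound fun u hu hvis => ?_)
  obtain ⟨L, hL⟩ := hω u hu
  exact IntervalDesign.tendsto_Fhat_of_tendsto_normalizedMart hvis hL

/-- **Theorem 1(ii), lower boundary case.** If `F(1) ≥ p+Δ₂` (so that the MTD
is the lowest level `u* = 1`), then almost surely the interval design eventually settles at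
level `1`. -/
theorem interval_design_converges_lower_boundary
    {Ω : Type*} [MeasurableSpace Ω] (P : Measure Ω) [IsProbabilityMeasure P]
    (m : ℕ) (hm : 1 ≤ m)
    (F : ℕ → ℝ) (hFmono : StrictMonoOn F (Set.Icc 1 m))
    (hF01 : ∀ v ∈ Set.Icc 1 m, F v ∈ Set.Icc (0:ℝ) 1)
    (U : ℕ → Ω → ℝ) (hUmeas : ∀ i, Measurable (U i))
    (hUindep : iIndepFun U P)
    (hUdist : ∀ i, Measure.map (U i) P = volume.restrict (Set.Icc (0:ℝ) 1))
    (X : ℕ → Ω → ℕ) (hXmeas : ∀ i, Measurable (X i))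
    (hXrange : ∀ i, 1 ≤ i → ∀ ω, X i ω ∈ Set.Icc 1 m)
    (x₀ : ℕ) (hx₀ : x₀ ∈ Set.Icc 1 m) (hX1 : ∀ ω, X 1 ω = x₀)
    (p Δ₁ Δ₂ : ℝ) (hp : p ∈ Set.Ioo (0:ℝ) 1) (hΔ₁ : 0 < Δ₁) (hΔ₂ : 0 < Δ₂)
    (hrule : intervalRule m p Δ₁ Δ₂ F U X)
    (hbound : p + Δ₂ ≤ F 1) :
    ∀ᵐ ω ∂P, ∃ N, ∀ n, N ≤ n → X n ω = 1 :=
  interval_design_converges_lower_boundary_general P m hm F hFmono hF01 U hUmeas hUindep hUdist X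
    hXrange x₀ hX1 p Δ₁ Δ₂ hΔ₁ hΔ₂ hrule hbound
end
end

section
/- (Key step in the proof of Theorem 1(i).) Consider the interval design with target p ∈ (0,1), margins Δp₁, Δp₂ > 0, and MTD u*. Suppose F(u*) ∈ (p−Δp₁, p+Δp₂) and u* is the unique level u with F(u) ∈ [p−Δp₁, p+Δp₂]. Then almost surely the MTD is visited infinitely often: n_{u*}(n) → ∞ as n → ∞. Equivalently, the event that all levels visited infinitely often lie strictly above u*, and the event that they all lie strictly below u*, each have probability zero. -/
/-
For a fixed level `a`, the terms `1{X_i = a} (Y_i − F a)` are martingale differences for the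
filtration `σ(U_1, …, U_n)`: the dose `X_{n+1}` is determined by `U_1, …, U_n`, and the response at
it is a fresh Bernoulli(`F a`) draw. Dividing the `i`-th term by the visit count `n_a(i)` gives a
martingale whose increments are orthogonal with `∑ E[increment²] ≤ ∑ 1/k² ≤ 2`, so it converges
almost surely, and Kronecker's lemma turns this into `F̂_n(a) → F(a)` on `{n_a(n) → ∞}`.

On such a path, a level `a > u*` visited infinitely often has `F a > p + Δ₂`, so eventually every
visit to `a` is followed by one to `a − 1`; symmetrically below `u*`. Starting from any level
visited infinitely often and stepping towards `u*` shows that `u*` is visited infinitely often.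
-/

open MeasureTheory ProbabilityTheory Filter

noncomputable section

open Finset Topology Asymptotics

theorem Filter.Tendsto.weighted_cesaro {s w : ℕ → ℝ} {c : ℝ} (hs : Tendsto s atTop (𝓝 c))
    (hw : 0 ≤ w) (hW : Tendsto (fun n => ∑ i ∈ range n, w i) atTop atTop) :
    Tendsto (fun n => (∑ i ∈ range n, w i * s i) / ∑ i ∈ range n, w i) atTop (𝓝 c) := by
  have hsmall : (fun i => w i * (s i - c)) =o[atTop] w := by
    simpa using (isBigO_refl w atTop).mul_isLittleO
      ((isLittleO_one_iff ℝ).2 (tendsto_sub_nhds_zero_iff.2 hs))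
  have herr := ((hsmall.sum_range hw hW).tendsto_div_nhds_zero).const_add c
  rw [add_zero] at herr
  refine herr.congr' ?_
  filter_upwards [hW.eventually_gt_atTop 0] with n hn
  simp only [mul_sub, sum_sub_distrib, ← sum_mul]
  field_simp
  ring

/-- Kronecker's lemma, for nondecreasing weights `b → ∞`. -/
theorem tendsto_sum_mul_div_of_tendsto_sum {b d : ℕ → ℝ} {c : ℝ} (hb : Monotone b)
    (hbt : Tendsto b atTop atTop) (hd : Tendsto (fun n => ∑ i ∈ range n, d i) atTop (𝓝 c)) :
    Tendsto (fun n => (∑ i ∈ range (n + 1), b i * d i) / b n) atTop (𝓝 0) := by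
  set S := fun n => ∑ i ∈ range n, d i
  set w := fun i => b (i + 1) - b i
  have habel : ∀ n, ∑ i ∈ range (n + 1), b i * d i
      = b n * S (n + 1) - ∑ i ∈ range n, w i * S (i + 1) := by
    intro n
    induction n with
    | zero => simp [S]
    | succ n ih =>
      rw [sum_range_succ, ih, sum_range_succ _ n]
      simp only [S, w, sum_range_succ]
      ring
  have hwsum : ∀ n, ∑ i ∈ range n, w i = b n - b 0 := sum_range_sub b
  have hB : Tendsto (fun n => ∑ i ∈ range n, w i) atTop atTop := by
    simp only [hwsum, sub_eq_add_neg]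
    exact tendsto_atTop_add_const_right _ _ hbt
  have hS : Tendsto (fun i => S (i + 1)) atTop (𝓝 c) := hd.comp (tendsto_add_atTop_nat 1)
  have havg := hS.weighted_cesaro (w := w) (fun i => sub_nonneg.2 (hb i.le_succ)) hB
  have hratio : Tendsto (fun n => (∑ i ∈ range n, w i) / b n) atTop (𝓝 1) := by
    have := (hbt.inv_tendsto_atTop.const_mul (b 0)).const_sub 1
    rw [mul_zero, sub_zero] at this
    refine this.congr' ?_
    filter_upwards [hbt.eventually_gt_atTop 0] with n hn
    rw [hwsum, Pi.inv_apply]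
    field_simp
  have := hS.sub (havg.mul hratio)
  rw [mul_one, sub_self] at this
  refine this.congr' ?_
  filter_upwards [hB.eventually_gt_atTop 0, hbt.eventually_gt_atTop 0] with n hn hbn
  rw [habel]
  field_simp

lemma sum_Icc_one_eq_sum_range {M : Type*} [AddCommMonoid M] (f : ℕ → M) (n : ℕ) :
    ∑ i ∈ Icc 1 n, f i = ∑ i ∈ range n, f (i + 1) := by
  induction n with
  | zero => simp
  | succ n ih => rw [sum_Icc_succ_top (Nat.le_add_left 1 n), ih, sum_range_succ]

lemma Nat.of_steps_toward {P : ℕ → Prop} {u a : ℕ} (ha : P a)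
    (hdown : ∀ k, u < k → P k → P (k - 1)) (hup : ∀ k, k < u → P k → P (k + 1)) : P u := by
  rcases le_total u a with hua | hau
  · induction a, hua using Nat.le_induction with
    | base => exact ha
    | succ k hk ih => exact ih (by simpa using hdown (k + 1) (by omega) ha)
  · have : ∀ k, a ≤ k → k ≤ u → P k := by
      intro k hk
      induction k, hk using Nat.le_induction with
      | base => exact fun _ => ha
      | succ k hk ih => exact fun hku => hup k (by omega) (ih (by omega))
    exact this u hau le_rfl

theorem Measurable.eval_index {Ω β : Type*} {mΩ : MeasurableSpace Ω} [MeasurableSpace β]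
    {N : Ω → ℕ} (hN : Measurable N) {f : ℕ → Ω → β} (hf : ∀ k, Measurable (f k)) :
    Measurable fun ω => f (N ω) ω :=
  (measurable_from_prod_countable_right (f := fun q : ℕ × Ω => f q.1 q.2) hf).comp
    (hN.prodMk measurable_id)

section Visits

variable {Ω : Type*} {X : ℕ → Ω → ℕ} {u : ℕ} {ω : Ω}

@[simp] lemma visits_zero : visits X u 0 ω = 0 := rfl

lemma visits_succ (n : ℕ) :
    visits X u (n + 1) ω = visits X u n ω + if X (n + 1) ω = u then 1 else 0 := by
  simp only [visits, card_filter, sum_Icc_succ_top (Nat.le_add_left 1 n)]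

lemma visits_mono : Monotone (visits X u · ω) :=
  monotone_nat_of_le_succ fun n => by rw [visits_succ]; omega

lemma one_le_visits {n : ℕ} (hn : 1 ≤ n) (h : X n ω = u) : 1 ≤ visits X u n ω := by
  obtain ⟨k, rfl⟩ := Nat.exists_eq_add_of_le' hn
  rw [visits_succ, if_pos h]
  omega

lemma tendsto_visits_atTop_iff :
    Tendsto (visits X u · ω) atTop atTop ↔ ∃ᶠ n in atTop, X n ω = u := by
  rw [tendsto_atTop_atTop_iff_of_monotone visits_mono]
  constructor
  · intro h
    by_contra hfin
    obtain ⟨N, hN⟩ := eventually_atTop.1 (not_frequently.1 hfin)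
    have hconst : ∀ n ≥ N, visits X u n ω = visits X u N ω := by
      intro n hn
      induction n, hn using Nat.le_induction with
      | base => rfl
      | succ n hn ih => rw [visits_succ, if_neg (hN _ (by omega)), ih, add_zero]
    obtain ⟨n, hn⟩ := h (visits X u N ω + 1)
    have hle : visits X u n ω ≤ visits X u (max n N) ω := visits_mono (le_max_left n N)
    have := hconst (max n N) (le_max_right n N)
    omega
  · intro h K
    induction K with
    | zero => exact ⟨0, Nat.zero_le _⟩
    | succ K ih =>
      obtain ⟨n, hn⟩ := ih
      obtain ⟨j, hj, hXj⟩ := frequently_atTop.1 h (n + 1)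
      obtain ⟨k, rfl⟩ : ∃ k, j = k + 1 := ⟨j - 1, by omega⟩
      have hle : visits X u n ω ≤ visits X u k ω := visits_mono (by omega)
      refine ⟨k + 1, ?_⟩
      rw [visits_succ, if_pos hXj]
      omega

lemma sum_inv_sq_visits (n : ℕ) :
    ∑ i ∈ Icc 1 n, (if X i ω = u then ((visits X u i ω : ℝ) ^ 2)⁻¹ else 0)
      = ∑ k ∈ Icc 1 (visits X u n ω), ((k : ℝ) ^ 2)⁻¹ := by
  induction n with
  | zero => simp
  | succ n ih =>
    rw [sum_Icc_succ_top (Nat.le_add_left 1 n), ih, visits_succ]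
    split_ifs <;> simp [sum_Icc_succ_top]

lemma sum_inv_sq_visits_le_two (n : ℕ) :
    ∑ i ∈ Icc 1 n, (if X i ω = u then ((visits X u i ω : ℝ) ^ 2)⁻¹ else 0) ≤ 2 := by
  rw [sum_inv_sq_visits, show Icc 1 (visits X u n ω) = Ioo 0 (visits X u n ω + 1) by
    ext k; simp only [mem_Icc, mem_Ioo]; omega]
  simpa using sum_Ioo_inv_sq_le (α := ℝ) 0 (visits X u n ω + 1)

end Visits

section Measurability

variable {Ω : Type*} {F : ℕ → ℝ} {U : ℕ → Ω → ℝ} {X : ℕ → Ω → ℕ}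

lemma measurable_resp {m : MeasurableSpace Ω} {i : ℕ} (hX : Measurable[m] (X i))
    (hU : Measurable[m] (U i)) : Measurable[m] (resp F U X i) :=
  Measurable.ite (measurableSet_le hU (measurable_from_nat.comp hX)) measurable_const
    measurable_const

lemma measurable_visits {m : MeasurableSpace Ω} {u j : ℕ}
    (hX : ∀ i ∈ Icc 1 j, Measurable[m] (X i)) : Measurable[m] fun ω => (visits X u j ω : ℝ) := by
  simp only [visits, card_filter, Nat.cast_sum, Nat.cast_ite, Nat.cast_one, Nat.cast_zero]
  exact Finset.measurable_sum _ fun i hi =>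
    Measurable.ite (hX i hi (measurableSet_singleton u)) measurable_const measurable_const

lemma measurable_Fhat {m : MeasurableSpace Ω} {v n : ℕ} (hX : ∀ i ∈ Icc 1 n, Measurable[m] (X i))
    (hU : ∀ i ∈ Icc 1 n, Measurable[m] (U i)) : Measurable[m] (Fhat F U X v n) :=
  (Finset.measurable_sum _ fun i hi => Measurable.ite (hX i hi (measurableSet_singleton v))
    (measurable_resp (hX i hi) (hU i hi)) measurable_const).div (measurable_visits hX)

lemma measurable_natFilt [MeasurableSpace Ω] (hU : ∀ i, Measurable (U i)) {i n : ℕ}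
    (hi : i ∈ Icc 1 n) : Measurable[natFilt U hU n] (U i) :=
  measurable_iff_comap_le.2 <|
    le_iSup₂ (f := fun j (_ : j ∈ Icc 1 n) => MeasurableSpace.comap (U j) inferInstance) i hi

end Measurability

def intervalStep (m : ℕ) (p Δ₁ Δ₂ : ℝ) (v : ℕ) (q : ℝ) : ℕ :=
  if q ≤ p - Δ₁ then min (v + 1) m else if p + Δ₂ ≤ q then max (v - 1) 1 else v

lemma measurable_intervalStep (m : ℕ) (p Δ₁ Δ₂ : ℝ) (v : ℕ) :
    Measurable (intervalStep m p Δ₁ Δ₂ v) :=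
  Measurable.ite measurableSet_Iic measurable_const
    (Measurable.ite measurableSet_Ici measurable_const measurable_const)

namespace intervalRule

variable {Ω : Type*} {m : ℕ} {p Δ₁ Δ₂ : ℝ} {F : ℕ → ℝ} {U : ℕ → Ω → ℝ} {X : ℕ → Ω → ℕ}

lemma eq_intervalStep (hrule : intervalRule m p Δ₁ Δ₂ F U X) {n : ℕ} (hn : 1 ≤ n) (ω : Ω) :
    X (n + 1) ω = intervalStep m p Δ₁ Δ₂ (X n ω) (Fhat F U X (X n ω) n ω) := by
  obtain ⟨hstay, hup, hdown⟩ := hrule n hn ω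
  unfold intervalStep
  split_ifs with h₁ h₂
  · exact hup h₁
  · exact hdown h₂
  · exact hstay (not_le.1 h₁) (not_le.1 h₂)

lemma measurable_succ [MeasurableSpace Ω] (hrule : intervalRule m p Δ₁ Δ₂ F U X)
    (hU : ∀ i, Measurable (U i)) {x₀ : ℕ} (hX1 : ∀ ω, X 1 ω = x₀) (n : ℕ) :
    Measurable[natFilt U hU n] (X (n + 1)) := by
  induction n using Nat.strong_induction_on with
  | _ n ih =>
    rcases n with _ | n
    · rw [show X (0 + 1) = fun _ => x₀ from funext hX1]
      exact measurable_const
    have hX : ∀ i ∈ Icc 1 (n + 1), Measurable[natFilt U hU (n + 1)] (X i) := by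
      intro i hi
      obtain ⟨k, rfl⟩ : ∃ k, i = k + 1 := ⟨i - 1, by grind⟩
      exact (ih k (by grind)).mono ((natFilt U hU).mono (by grind)) le_rfl
    rw [funext (hrule.eq_intervalStep (Nat.le_add_left 1 n))]
    exact Measurable.eval_index (f := fun v ω => intervalStep m p Δ₁ Δ₂ v (Fhat F U X v (n + 1) ω))
      (hX _ (by simp)) fun v =>
      (measurable_intervalStep m p Δ₁ Δ₂ v).comp
        (measurable_Fhat hX fun i hi => measurable_natFilt hU hi)

end intervalRule

def martIncr {Ω : Type*} (F : ℕ → ℝ) (U : ℕ → Ω → ℝ) (X : ℕ → Ω → ℕ) (a i : ℕ) (ω : Ω) : ℝ :=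
  (if X i ω = a then 1 else 0) * (resp F U X i ω - F a)

def scaledMart {Ω : Type*} (F : ℕ → ℝ) (U : ℕ → Ω → ℝ) (X : ℕ → Ω → ℕ) (a n : ℕ) (ω : Ω) : ℝ :=
  ∑ i ∈ Icc 1 n, martIncr F U X a i ω / visits X a i ω

section Pathwise

variable {Ω : Type*} {F : ℕ → ℝ} {U : ℕ → Ω → ℝ} {X : ℕ → Ω → ℕ} {a : ℕ} {ω : Ω}

lemma abs_martIncr_le (hFa : F a ∈ Set.Icc 0 1) (i : ℕ) : |martIncr F U X a i ω| ≤ 1 := by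
  obtain ⟨h0, h1⟩ := hFa
  unfold martIncr resp
  split_ifs <;> simp [abs_le] <;> constructor <;> linarith

lemma abs_martIncr_div_visits_le (hFa : F a ∈ Set.Icc 0 1) (i : ℕ) :
    |martIncr F U X a i ω / visits X a i ω| ≤ 1 := by
  rw [abs_div, Nat.abs_cast]
  rcases Nat.eq_zero_or_pos (visits X a i ω) with h | h
  · simp [h]
  · rw [div_le_one (by exact_mod_cast h)]
    exact (abs_martIncr_le hFa i).trans (by exact_mod_cast h)

lemma abs_scaledMart_le (hFa : F a ∈ Set.Icc 0 1) (n : ℕ) : |scaledMart F U X a n ω| ≤ n :=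
  (abs_sum_le_sum_abs _ _).trans <| by
    simpa using sum_le_sum fun i (_ : i ∈ Icc 1 n) => abs_martIncr_div_visits_le (ω := ω) hFa i

lemma sq_martIncr_div_visits_le (hFa : F a ∈ Set.Icc 0 1) (i : ℕ) :
    (martIncr F U X a i ω / visits X a i ω) ^ 2
      ≤ if X i ω = a then ((visits X a i ω : ℝ) ^ 2)⁻¹ else 0 := by
  split_ifs with h
  · rw [div_pow, div_eq_mul_inv]
    refine mul_le_of_le_one_left (by positivity) ?_
    rw [← sq_abs]
    exact pow_le_one₀ (abs_nonneg _) (abs_martIncr_le hFa i)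
  · simp [martIncr, h]

lemma visits_mul_martIncr_div_visits {i : ℕ} (hi : 1 ≤ i) :
    (visits X a i ω : ℝ) * (martIncr F U X a i ω / visits X a i ω) = martIncr F U X a i ω := by
  by_cases h : X i ω = a
  · have : (visits X a i ω : ℝ) ≠ 0 :=
      Nat.cast_ne_zero.2 (Nat.one_le_iff_ne_zero.1 (one_le_visits hi h))
    field_simp
  · simp [martIncr, h]

lemma sum_resp_eq_Mart_add (n : ℕ) :
    ∑ i ∈ Icc 1 n, (if X i ω = a then resp F U X i ω else 0)
      = Mart F U X a n ω + F a * visits X a n ω := by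
  simp only [Mart, visits, card_filter, Nat.cast_sum, Nat.cast_ite, Nat.cast_one, Nat.cast_zero,
    mul_sum, ← sum_add_distrib]
  refine sum_congr rfl fun i _ => ?_
  split_ifs <;> ring

lemma scaledMart_succ (n : ℕ) (ω : Ω) : scaledMart F U X a (n + 1) ω
    = scaledMart F U X a n ω + martIncr F U X a (n + 1) ω / visits X a (n + 1) ω :=
  sum_Icc_succ_top (Nat.le_add_left 1 n) _

lemma tendsto_Fhat_of_tendsto_scaledMart {c : ℝ} (hv : Tendsto (visits X a · ω) atTop atTop)
    (hW : Tendsto (scaledMart F U X a · ω) atTop (𝓝 c)) :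
    Tendsto (Fhat F U X a · ω) atTop (𝓝 (F a)) := by
  have hkr := tendsto_sum_mul_div_of_tendsto_sum (b := fun i => (visits X a (i + 1) ω : ℝ))
    (d := fun i => martIncr F U X a (i + 1) ω / visits X a (i + 1) ω)
    (fun i j hij => Nat.cast_le.2 (visits_mono (Nat.succ_le_succ hij)))
    (tendsto_natCast_atTop_atTop.comp (hv.comp (tendsto_add_atTop_nat 1)))
    (by simpa only [scaledMart, sum_Icc_one_eq_sum_range] using hW)
  have hM : Tendsto (fun n => Mart F U X a n ω / visits X a n ω) atTop (𝓝 0) := by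
    rw [← tendsto_add_atTop_iff_nat 1]
    refine hkr.congr fun n => ?_
    simp only [Mart, sum_Icc_one_eq_sum_range,
      visits_mul_martIncr_div_visits (Nat.le_add_left 1 _)]
    rfl
  have := hM.add_const (F a)
  rw [zero_add] at this
  refine this.congr' ?_
  filter_upwards [hv.eventually_ge_atTop 1] with n hn
  have : (visits X a n ω : ℝ) ≠ 0 := Nat.cast_ne_zero.2 (Nat.one_le_iff_ne_zero.1 hn)
  rw [Fhat, sum_resp_eq_Mart_add]
  field_simp

end Pathwise

section Probability

variable {Ω : Type*} [MeasurableSpace Ω] {P : Measure Ω}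
  {F : ℕ → ℝ} {U : ℕ → Ω → ℝ} {X : ℕ → Ω → ℕ} {a : ℕ}

lemma indep_natFilt_comap_succ (hU : ∀ i, Measurable (U i)) (hind : iIndepFun U P) (n : ℕ) :
    Indep (natFilt U hU n) (MeasurableSpace.comap (U (n + 1)) inferInstance) P := by
  have h := indep_iSup_of_disjoint (fun i => (hU i).comap_le) hind.iIndep
    (S := (Icc 1 n : Set ℕ)) (T := {n + 1}) (by simp)
  rw [_root_.iSup_singleton] at h
  exact h

lemma integral_ite_le_of_map_eq {V : Ω → ℝ} (hV : Measurable V)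
    (hdist : P.map V = volume.restrict (Set.Icc 0 1)) {q : ℝ} (hq : q ∈ Set.Icc 0 1) :
    ∫ ω, (if V ω ≤ q then (1 : ℝ) else 0) ∂P = q := by
  have : (fun ω => if V ω ≤ q then (1 : ℝ) else 0) = fun ω => (Set.Iic q).indicator 1 (V ω) := by
    ext ω; simp [Set.indicator_apply]
  rw [this, ← integral_map (f := (Set.Iic q).indicator 1) hV.aemeasurable
    (measurable_one.indicator measurableSet_Iic).aestronglyMeasurable, hdist,
    integral_indicator_one measurableSet_Iic, measureReal_restrict_apply measurableSet_Iic,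
    show Set.Iic q ∩ Set.Icc 0 1 = Set.Icc 0 q by
      ext x
      simp only [Set.mem_inter_iff, Set.mem_Iic, Set.mem_Icc]
      exact ⟨fun h => ⟨h.2.1, h.1⟩, fun h => ⟨h.2, h.1, h.2.trans hq.2⟩⟩,
    Real.volume_real_Icc_of_le hq.1, sub_zero]

variable [IsProbabilityMeasure P]

/-- Orthogonality of `martIncr (n + 1)` to `ℱ_n`: the dose `X (n + 1)` is fixed by `ℱ_n`, and the
response at it is a fresh Bernoulli(`F a`) draw on `{X (n + 1) = a}`. -/
lemma integral_mul_martIncr_succ_eq_zero (hU : ∀ i, Measurable (U i)) (hind : iIndepFun U P)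
    (hdist : ∀ i, P.map (U i) = volume.restrict (Set.Icc 0 1)) (hFa : F a ∈ Set.Icc 0 1) {n : ℕ}
    (hXn : Measurable[natFilt U hU n] (X (n + 1))) {φ : Ω → ℝ}
    (hφ : Measurable[natFilt U hU n] φ) :
    ∫ ω, φ ω * martIncr F U X a (n + 1) ω ∂P = 0 := by
  set ψ : Ω → ℝ := fun ω => φ ω * (if X (n + 1) ω = a then 1 else 0)
  set g : ℝ → ℝ := fun x => (if x ≤ F a then 1 else 0) - F a
  have hpt : ∀ ω, φ ω * martIncr F U X a (n + 1) ω = ψ ω * g (U (n + 1) ω) := by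
    intro ω
    by_cases h : X (n + 1) ω = a <;> simp [martIncr, resp, ψ, g, h]
  have hψ : Measurable[natFilt U hU n] ψ :=
    hφ.mul (Measurable.ite (hXn (measurableSet_singleton a)) measurable_const measurable_const)
  have hbern : Measurable (fun x : ℝ => if x ≤ F a then (1 : ℝ) else 0) :=
    Measurable.ite measurableSet_Iic measurable_const measurable_const
  have hg : Measurable g := hbern.sub_const _
  have hψg : IndepFun ψ (fun ω => g (U (n + 1) ω)) P :=
    (IndepFun_iff_Indep _ _ _).2 <| indep_of_indep_of_le (indep_natFilt_comap_succ hU hind n)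
      hψ.comap_le (hg.comp (comap_measurable (U (n + 1)))).comap_le
  have hmean : ∫ ω, g (U (n + 1) ω) ∂P = 0 := by
    have hint : Integrable (fun ω => if U (n + 1) ω ≤ F a then (1 : ℝ) else 0) P :=
      .of_bound (hbern.comp (hU _)).aestronglyMeasurable 1
        (ae_of_all _ fun ω => by split_ifs <;> simp)
    simp only [g]
    rw [integral_sub hint (integrable_const _), integral_ite_le_of_map_eq (hU _) (hdist _) hFa]
    simp
  rw [integral_congr_ae (ae_of_all _ hpt), hψg.integral_fun_mul_eq_mul_integral
    (hψ.mono ((natFilt U hU).le n) le_rfl).aestronglyMeasurable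
    (hg.comp (hU _)).aestronglyMeasurable, hmean, mul_zero]

end Probability

section ScaledMart

variable {Ω : Type*} [MeasurableSpace Ω] {P : Measure Ω} [IsProbabilityMeasure P]
  {F : ℕ → ℝ} {U : ℕ → Ω → ℝ} {X : ℕ → Ω → ℕ} {a : ℕ} {hU : ∀ i, Measurable (U i)}
  (hpred : ∀ n, Measurable[natFilt U hU n] (X (n + 1)))
include hpred

lemma measurable_natFilt_of_predictable {i n : ℕ} (hi : i ∈ Icc 1 (n + 1)) :
    Measurable[natFilt U hU n] (X i) := by
  obtain ⟨k, rfl⟩ : ∃ k, i = k + 1 := ⟨i - 1, by grind⟩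
  exact (hpred k).mono ((natFilt U hU).mono (by grind)) le_rfl

lemma measurable_martIncr {i n : ℕ} (hi : i ∈ Icc 1 n) :
    Measurable[natFilt U hU n] (martIncr F U X a i) := by
  have hX := measurable_natFilt_of_predictable hpred (Icc_subset_Icc_right n.le_succ hi)
  exact (Measurable.ite (hX (measurableSet_singleton a)) measurable_const measurable_const).mul
    ((measurable_resp hX (measurable_natFilt hU hi)).sub_const _)

lemma measurable_visits_of_predictable {j n : ℕ} (hj : j ≤ n + 1) :
    Measurable[natFilt U hU n] fun ω => (visits X a j ω : ℝ) :=
  measurable_visits fun _ hi => measurable_natFilt_of_predictable hpred (Icc_subset_Icc_right hj hi)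

lemma measurable_scaledMart (n : ℕ) : Measurable[natFilt U hU n] (scaledMart F U X a n) :=
  Finset.measurable_sum _ fun _ hi => (measurable_martIncr hpred hi).div
    (measurable_visits_of_predictable hpred (by grind))

lemma integrable_scaledMart (hFa : F a ∈ Set.Icc 0 1) (n : ℕ) :
    Integrable (scaledMart F U X a n) P :=
  .of_bound ((measurable_scaledMart hpred n).mono ((natFilt U hU).le n) le_rfl).aestronglyMeasurable
    n (ae_of_all _ fun _ => abs_scaledMart_le hFa n)

lemma integrable_sq_scaledMart (hFa : F a ∈ Set.Icc 0 1) (n : ℕ) :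
    Integrable (fun ω => scaledMart F U X a n ω ^ 2) P :=
  .of_bound (((measurable_scaledMart hpred n).mono ((natFilt U hU).le n) le_rfl).pow_const
    2).aestronglyMeasurable (n ^ 2) (ae_of_all _ fun _ => by
      rw [Real.norm_eq_abs, abs_pow]
      exact pow_le_pow_left₀ (abs_nonneg _) (abs_scaledMart_le hFa n) 2)

lemma measurable_martIncr_div_visits {i : ℕ} (hi : 1 ≤ i) :
    Measurable fun ω => martIncr F U X a i ω / visits X a i ω :=
  ((measurable_martIncr hpred (Finset.mem_Icc.2 ⟨hi, le_rfl⟩)).div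
    (measurable_visits_of_predictable hpred i.le_succ)).mono ((natFilt U hU).le i) le_rfl

lemma integrable_sq_martIncr_div_visits (hFa : F a ∈ Set.Icc 0 1) {i : ℕ} (hi : 1 ≤ i) :
    Integrable (fun ω => (martIncr F U X a i ω / visits X a i ω) ^ 2) P :=
  .of_bound ((measurable_martIncr_div_visits hpred hi).pow_const 2).aestronglyMeasurable 1
    (ae_of_all _ fun _ => by
      rw [Real.norm_eq_abs, abs_pow]
      exact pow_le_one₀ (abs_nonneg _) (abs_martIncr_div_visits_le hFa _))

variable (hind : iIndepFun U P) (hdist : ∀ i, P.map (U i) = volume.restrict (Set.Icc 0 1))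
  (hFa : F a ∈ Set.Icc 0 1)
include hind hdist hFa

lemma integral_mul_martIncr_div_visits_succ_eq_zero {n : ℕ} {φ : Ω → ℝ}
    (hφ : Measurable[natFilt U hU n] φ) :
    ∫ ω, φ ω * (martIncr F U X a (n + 1) ω / visits X a (n + 1) ω) ∂P = 0 := by
  rw [← integral_mul_martIncr_succ_eq_zero hU hind hdist hFa (hpred n)
    (φ := fun ω => φ ω / visits X a (n + 1) ω)
    (hφ.div (measurable_visits_of_predictable hpred le_rfl))]
  congr 1 with ω
  ring

lemma martingale_scaledMart : Martingale (scaledMart F U X a) (natFilt U hU) P := by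
  refine martingale_of_setIntegral_eq_succ
    (fun n => (measurable_scaledMart hpred n).stronglyMeasurable) (integrable_scaledMart hpred hFa)
    fun n s hs => ?_
  have hincr : Integrable (fun ω => martIncr F U X a (n + 1) ω / visits X a (n + 1) ω) P := by
    refine ((integrable_scaledMart hpred hFa (n + 1)).sub (integrable_scaledMart hpred hFa n)).congr
      (ae_of_all _ fun ω => ?_)
    simp [scaledMart_succ]
  have hzero : ∫ ω in s, martIncr F U X a (n + 1) ω / visits X a (n + 1) ω ∂P = 0 := by
    rw [← integral_indicator (((natFilt U hU).le n) s hs),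
      ← integral_mul_martIncr_div_visits_succ_eq_zero hpred hind hdist hFa
        (measurable_const.indicator hs (f := fun _ => (1 : ℝ)))]
    congr 1 with ω
    by_cases hω : ω ∈ s <;> simp [hω]
  rw [funext (scaledMart_succ n),
    integral_add (integrable_scaledMart hpred hFa n).integrableOn hincr.integrableOn, hzero,
    add_zero]

lemma integral_sq_scaledMart (n : ℕ) : ∫ ω, scaledMart F U X a n ω ^ 2 ∂P
    = ∫ ω, ∑ i ∈ Icc 1 n, (martIncr F U X a i ω / visits X a i ω) ^ 2 ∂P := by
  induction n with
  | zero => simp [scaledMart]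
  | succ n ih =>
    have hD := measurable_martIncr_div_visits (F := F) (a := a) hpred (Nat.le_add_left 1 n)
    have hW := (measurable_scaledMart (F := F) (a := a) hpred n).mono ((natFilt U hU).le n) le_rfl
    have hcross : Integrable (fun ω => 2 * scaledMart F U X a n ω
        * (martIncr F U X a (n + 1) ω / visits X a (n + 1) ω)) P :=
      .of_bound ((hW.const_mul 2).mul hD).aestronglyMeasurable (2 * n) (ae_of_all _ fun ω => by
        rw [Real.norm_eq_abs, abs_mul, abs_mul, abs_two]
        have := abs_martIncr_div_visits_le (U := U) (X := X) (ω := ω) hFa (n + 1)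
        have := abs_scaledMart_le (U := U) (X := X) (ω := ω) hFa n
        nlinarith [abs_nonneg (scaledMart F U X a n ω)])
    have hsq := integrable_sq_martIncr_div_visits (P := P) hpred hFa (Nat.le_add_left 1 n)
    have hexp : ∀ ω, scaledMart F U X a (n + 1) ω ^ 2 = scaledMart F U X a n ω ^ 2
        + 2 * scaledMart F U X a n ω * (martIncr F U X a (n + 1) ω / visits X a (n + 1) ω)
        + (martIncr F U X a (n + 1) ω / visits X a (n + 1) ω) ^ 2 := fun ω => by
      rw [scaledMart_succ]
      ring
    have hsum :
        Integrable (fun ω => ∑ i ∈ Icc 1 n, (martIncr F U X a i ω / visits X a i ω) ^ 2) P :=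
      integrable_finsetSum _ fun i hi =>
        integrable_sq_martIncr_div_visits hpred hFa (Finset.mem_Icc.1 hi).1
    rw [integral_congr_ae (ae_of_all _ hexp),
      integral_add (by exact (integrable_sq_scaledMart hpred hFa n).add hcross) hsq,
      integral_add (integrable_sq_scaledMart hpred hFa n) hcross, ih,
      integral_mul_martIncr_div_visits_succ_eq_zero hpred hind hdist hFa
        ((measurable_scaledMart hpred n).const_mul 2), add_zero,
      ← integral_add hsum hsq]
    simp only [sum_Icc_succ_top (Nat.le_add_left 1 n)]

lemma integral_sq_scaledMart_le_two (n : ℕ) : ∫ ω, scaledMart F U X a n ω ^ 2 ∂P ≤ 2 := by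
  rw [integral_sq_scaledMart hpred hind hdist hFa]
  refine (integral_mono_of_nonneg (ae_of_all _ fun _ => by positivity) (integrable_const 2)
    (ae_of_all _ fun ω => ?_)).trans (by simp)
  exact (sum_le_sum fun i _ => sq_martIncr_div_visits_le hFa i).trans (sum_inv_sq_visits_le_two n)

lemma eLpNorm_scaledMart_le (n : ℕ) : eLpNorm (scaledMart F U X a n) 1 P ≤ 3 := by
  have hint := integrable_scaledMart (P := P) hpred hFa n
  have hL1 : ∫ ω, ‖scaledMart F U X a n ω‖ ∂P ≤ 3 :=
    calc ∫ ω, ‖scaledMart F U X a n ω‖ ∂P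
        ≤ ∫ ω, (1 + scaledMart F U X a n ω ^ 2) ∂P :=
          integral_mono hint.norm ((integrable_const 1).add (integrable_sq_scaledMart hpred hFa n))
            fun ω => by
              rw [Real.norm_eq_abs]
              nlinarith [sq_abs (scaledMart F U X a n ω), sq_nonneg (|scaledMart F U X a n ω| - 1)]
      _ = 1 + ∫ ω, scaledMart F U X a n ω ^ 2 ∂P := by
          rw [integral_add (integrable_const 1) (integrable_sq_scaledMart hpred hFa n)]
          simp
      _ ≤ 3 := by linarith [integral_sq_scaledMart_le_two hpred hind hdist hFa n]
  rw [eLpNorm_one_eq_lintegral_enorm, ← ofReal_integral_norm_eq_lintegral_enorm hint]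
  exact (ENNReal.ofReal_le_ofReal hL1).trans (by norm_num)

theorem ae_tendsto_Fhat_of_tendsto_visits :
    ∀ᵐ ω ∂P, Tendsto (visits X a · ω) atTop atTop → Tendsto (Fhat F U X a · ω) atTop (𝓝 (F a)) :=
  ((martingale_scaledMart hpred hind hdist hFa).submartingale.exists_ae_tendsto_of_bdd
    (eLpNorm_scaledMart_le hpred hind hdist hFa)).mono
    fun _ ⟨_, hc⟩ hv => tendsto_Fhat_of_tendsto_scaledMart hv hc

end ScaledMart

namespace intervalRule

variable {Ω : Type*} {m : ℕ} {p Δ₁ Δ₂ : ℝ} {F : ℕ → ℝ} {U : ℕ → Ω → ℝ} {X : ℕ → Ω → ℕ}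
  {a : ℕ} {ω : Ω}

lemma frequently_pred (hrule : intervalRule m p Δ₁ Δ₂ F U X) (hfreq : ∃ᶠ n in atTop, X n ω = a)
    (hF : ∀ᶠ n in atTop, p + Δ₂ ≤ Fhat F U X a n ω) : ∃ᶠ n in atTop, X n ω = max (a - 1) 1 := by
  refine (tendsto_add_atTop_nat 1).frequently
    ((hfreq.and_eventually (hF.and (eventually_ge_atTop 1))).mono ?_)
  rintro n ⟨hXn, hFn, hn⟩
  have hdown := (hrule n hn ω).2.2
  rw [hXn] at hdown
  exact hdown hFn

lemma frequently_succ (hrule : intervalRule m p Δ₁ Δ₂ F U X) (hfreq : ∃ᶠ n in atTop, X n ω = a)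
    (hF : ∀ᶠ n in atTop, Fhat F U X a n ω ≤ p - Δ₁) : ∃ᶠ n in atTop, X n ω = min (a + 1) m := by
  refine (tendsto_add_atTop_nat 1).frequently
    ((hfreq.and_eventually (hF.and (eventually_ge_atTop 1))).mono ?_)
  rintro n ⟨hXn, hFn, hn⟩
  have hup := (hrule n hn ω).2.1
  rw [hXn] at hup
  exact hup hFn

/-- The levels visited infinitely often form a nonempty set that is closed under stepping towards
`ustar`. -/
theorem frequently_eq_of_tendsto_Fhat (hrule : intervalRule m p Δ₁ Δ₂ F U X)
    (hrange : ∀ n, 1 ≤ n → X n ω ∈ Set.Icc 1 m) {ustar : ℕ} (hustar : ustar ∈ Set.Icc 1 m)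
    (habove : ∀ u ∈ Set.Icc 1 m, ustar < u → p + Δ₂ < F u)
    (hbelow : ∀ u ∈ Set.Icc 1 m, u < ustar → F u < p - Δ₁)
    (hconv : ∀ u ∈ Set.Icc 1 m, (∃ᶠ n in atTop, X n ω = u) →
      Tendsto (Fhat F U X u · ω) atTop (𝓝 (F u))) :
    ∃ᶠ n in atTop, X n ω = ustar := by
  have hmem : ∀ u, (∃ᶠ n in atTop, X n ω = u) → u ∈ Set.Icc 1 m := fun u hu => by
    obtain ⟨n, hXn, hn⟩ := (hu.and_eventually (eventually_ge_atTop 1)).exists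
    exact hXn ▸ hrange n hn
  obtain ⟨u, -, hu⟩ := (Set.finite_Icc 1 m).frequently_exists (p := fun u n => X n ω = u) |>.1
    ((eventually_ge_atTop 1).mono fun n hn => ⟨X n ω, hrange n hn, rfl⟩).frequently
  refine Nat.of_steps_toward (P := fun u => ∃ᶠ n in atTop, X n ω = u) hu
    (fun k hk hfreq => ?_) (fun k hk hfreq => ?_)
  · have hkm := hmem k hfreq
    have := hrule.frequently_pred hfreq ((hconv k hkm hfreq).eventually_const_le (habove k hkm hk))
    rwa [max_eq_left (by grind)] at this
  · have hkm := hmem k hfreq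
    have := hrule.frequently_succ hfreq ((hconv k hkm hfreq).eventually_le_const (hbelow k hkm hk))
    rwa [min_eq_left (by grind)] at this

end intervalRule

theorem interval_design_MTD_visited_infinitely_often_general
    {Ω : Type*} [MeasurableSpace Ω] (P : Measure Ω) [IsProbabilityMeasure P]
    (m : ℕ)
    (F : ℕ → ℝ) (hFmono : StrictMonoOn F (Set.Icc 1 m))
    (hF01 : ∀ v ∈ Set.Icc 1 m, F v ∈ Set.Icc (0:ℝ) 1)
    (U : ℕ → Ω → ℝ) (hUmeas : ∀ i, Measurable (U i))
    (hUindep : iIndepFun U P)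
    (hUdist : ∀ i, Measure.map (U i) P = volume.restrict (Set.Icc (0:ℝ) 1))
    (X : ℕ → Ω → ℕ)
    (hXrange : ∀ i, 1 ≤ i → ∀ ω, X i ω ∈ Set.Icc 1 m)
    (x₀ : ℕ) (hX1 : ∀ ω, X 1 ω = x₀)
    (p Δ₁ Δ₂ : ℝ)
    (hrule : intervalRule m p Δ₁ Δ₂ F U X)
    (ustar : ℕ) (hustar : ustar ∈ Set.Icc 1 m)
    (hin : F ustar ∈ Set.Ioo (p - Δ₁) (p + Δ₂))
    (huniq : ∀ u ∈ Set.Icc 1 m, F u ∈ Set.Icc (p - Δ₁) (p + Δ₂) → u = ustar) :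
    (∀ᵐ ω ∂P, Tendsto (fun n => visits X ustar n ω) atTop atTop) ∧
    P {ω | ∀ u, (∃ᶠ n in atTop, X n ω = u) → ustar < u} = 0 ∧
    P {ω | ∀ u, (∃ᶠ n in atTop, X n ω = u) → u < ustar} = 0 := by
  have habove : ∀ u ∈ Set.Icc 1 m, ustar < u → p + Δ₂ < F u := fun u hu hlt => by
    have := hFmono hustar hu hlt
    by_contra h
    exact hlt.ne' (huniq u hu ⟨by linarith [hin.1], not_lt.1 h⟩)
  have hbelow : ∀ u ∈ Set.Icc 1 m, u < ustar → F u < p - Δ₁ := fun u hu hlt => by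
    have := hFmono hu hustar hlt
    by_contra h
    exact hlt.ne (huniq u hu ⟨not_lt.1 h, by linarith [hin.2]⟩)
  have hconv : ∀ᵐ ω ∂P, ∀ a ∈ Set.Icc 1 m, Tendsto (visits X a · ω) atTop atTop →
      Tendsto (Fhat F U X a · ω) atTop (𝓝 (F a)) :=
    (Set.finite_Icc 1 m).eventually_all.2 fun a ha => ae_tendsto_Fhat_of_tendsto_visits
      (hrule.measurable_succ hUmeas hX1) hUindep hUdist (hF01 a ha)
  have hfreq : ∀ᵐ ω ∂P, ∃ᶠ n in atTop, X n ω = ustar := hconv.mono fun ω hω =>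
    hrule.frequently_eq_of_tendsto_Fhat (fun n hn => hXrange n hn ω) hustar habove hbelow
      fun a ha hfreq => hω a ha (tendsto_visits_atTop_iff.2 hfreq)
  refine ⟨hfreq.mono fun ω hω => tendsto_visits_atTop_iff.2 hω, ?_, ?_⟩ <;>
    exact measure_mono_null (fun ω hω hfreq => lt_irrefl ustar (hω ustar hfreq)) (ae_iff.1 hfreq)

/-- **key step in the proof of Theorem 1(i).** Under the conditions of
Theorem 1(i), almost surely the MTD `u*` is visited infinitely often, i.e. `n_{u*}(n) → ∞`;
equivalently, the event that all levels visited infinitely often lie strictly above `u*`,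
and the event that they all lie strictly below `u*`, each have probability zero. -/
theorem interval_design_MTD_visited_infinitely_often
    {Ω : Type*} [MeasurableSpace Ω] (P : Measure Ω) [IsProbabilityMeasure P]
    (m : ℕ) (hm : 1 ≤ m)
    (F : ℕ → ℝ) (hFmono : StrictMonoOn F (Set.Icc 1 m))
    (hF01 : ∀ v ∈ Set.Icc 1 m, F v ∈ Set.Icc (0:ℝ) 1)
    (U : ℕ → Ω → ℝ) (hUmeas : ∀ i, Measurable (U i))
    (hUindep : iIndepFun U P)
    (hUdist : ∀ i, Measure.map (U i) P = volume.restrict (Set.Icc (0:ℝ) 1))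
    (X : ℕ → Ω → ℕ) (hXmeas : ∀ i, Measurable (X i))
    (hXrange : ∀ i, 1 ≤ i → ∀ ω, X i ω ∈ Set.Icc 1 m)
    (x₀ : ℕ) (hx₀ : x₀ ∈ Set.Icc 1 m) (hX1 : ∀ ω, X 1 ω = x₀)
    (p Δ₁ Δ₂ : ℝ) (hp : p ∈ Set.Ioo (0:ℝ) 1) (hΔ₁ : 0 < Δ₁) (hΔ₂ : 0 < Δ₂)
    (hrule : intervalRule m p Δ₁ Δ₂ F U X)
    (ustar : ℕ) (hustar : ustar ∈ Set.Icc 1 m)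
    (hMTD : ∀ u ∈ Set.Icc 1 m, |F ustar - p| ≤ |F u - p|)
    (hin : F ustar ∈ Set.Ioo (p - Δ₁) (p + Δ₂))
    (huniq : ∀ u ∈ Set.Icc 1 m, F u ∈ Set.Icc (p - Δ₁) (p + Δ₂) → u = ustar) :
    (∀ᵐ ω ∂P, Tendsto (fun n => visits X ustar n ω) atTop atTop) ∧
    P {ω | ∀ u, (∃ᶠ n in atTop, X n ω = u) → ustar < u} = 0 ∧
    P {ω | ∀ u, (∃ᶠ n in atTop, X n ω = u) → u < ustar} = 0 :=
  interval_design_MTD_visited_infinitely_often_general P m F hFmono hF01 U hUmeas hUindep hUdist X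
    hXrange x₀ hX1 p Δ₁ Δ₂ hrule ustar hustar hin huniq
end
end
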